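/- Let p be an odd prime, v ∈ ℚ_p a p-adic unit that is not a square in ℚ_p, A = diag(1, -v, p), Q_+(x) = xᵀAx, B(x,y) = xᵀAy, and SO(3)_p = {L ∈ M₃(ℚ_p) : LᵀAL = A, det L = 1}. Let n ∈ ℚ_p³ be nonzero, and let x, y ∈ ℚ_p³ be nonzero vectors with B(n, x) = 0 and B(n, y) = 0. Then there exists R ∈ SO(3)_p with R n = n and R x = y if and only if Q_+(x) = Q_+(y). -/

import Mathlib

/-!
Over `ℚ_p` the form `x₁² - v x₂² + p x₃²` is anisotropic: as `v` is a unit nonsquare and `p` is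
odd, Hensel's lemma gives `‖a² - v b²‖ = max ‖a‖ ‖b‖ ^ 2`, an even power of `p`, while `‖p c²‖` is
an odd power of `p` unless `c = 0`. Hence every nonzero vector `u` has `Q u ≠ 0` and thus a
reflection `s_u`. If `Q x = Q y` and `x ≠ y`, then `s_{x-y}` maps `x` to `y` and fixes the axis `n`;
in dimension three some `u ≠ 0` is orthogonal to both `n` and `y`, and `s_u ∘ s_{x-y}` is the
required rotation. Conversely, isometries preserve `Q`.
-/

namespace Padic

open Polynomial

variable {p : ℕ} [Fact p.Prime]

theorem norm_two (hp : p ≠ 2) : ‖(2 : ℚ_[p])‖ = 1 := by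
  simpa using norm_natCast_eq_one_iff.2 ((Nat.coprime_primes Fact.out Nat.prime_two).2 hp)

theorem norm_sq_sub_eq_one (hp : p ≠ 2) {v t : ℚ_[p]} (hv : ‖v‖ = 1) (hvsq : ¬IsSquare v)
    (ht : ‖t‖ = 1) : ‖t ^ 2 - v‖ = 1 := by
  refine le_antisymm ?_ (not_lt.1 fun hlt => hvsq ?_)
  · calc ‖t ^ 2 - v‖ = ‖t ^ 2 + -v‖ := by rw [sub_eq_add_neg]
      _ ≤ max ‖t ^ 2‖ ‖-v‖ := nonarchimedean _ _
      _ = 1 := by simp [ht, hv]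
  · let T : ℤ_[p] := ⟨t, ht.le⟩
    let V : ℤ_[p] := ⟨v, hv.le⟩
    have hF : aeval T (X ^ 2 - C V) = T ^ 2 - V := by simp
    have hF' : aeval T (derivative (X ^ 2 - C V)) = 2 * T := by simp [one_add_one_eq_two]
    have h2T : ‖(2 * T : ℤ_[p])‖ = 1 := by
      have h2 : ((2 : ℤ_[p]) : ℚ_[p]) = 2 := by norm_cast
      rw [PadicInt.norm_def, PadicInt.coe_mul, norm_mul, h2, norm_two hp, one_mul]
      exact ht
    obtain ⟨z, hz, -⟩ := hensels_lemma (F := X ^ 2 - C V) (a := T) (by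
      rwa [hF, hF', h2T, one_pow, PadicInt.norm_def])
    refine ⟨z, ?_⟩
    have : z ^ 2 = V := by simpa [sub_eq_zero] using hz
    simpa [sq, V] using congrArg ((↑) : ℤ_[p] → ℚ_[p]) this.symm

theorem norm_sq_sub_mul_sq (hp : p ≠ 2) {v : ℚ_[p]} (hv : ‖v‖ = 1) (hvsq : ¬IsSquare v)
    (a b : ℚ_[p]) : ‖a ^ 2 - v * b ^ 2‖ = max ‖a‖ ‖b‖ ^ 2 := by
  rcases eq_or_ne ‖a‖ ‖b‖ with hab | hab
  · rcases eq_or_ne b 0 with rfl | hb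
    · simp_all
    · have hab' : ‖a / b‖ = 1 := by rw [norm_div, hab, div_self (norm_ne_zero_iff.2 hb)]
      calc ‖a ^ 2 - v * b ^ 2‖ = ‖b‖ ^ 2 * ‖(a / b) ^ 2 - v‖ := by
            rw [← norm_pow, ← norm_mul]; congr 1; field_simp
        _ = max ‖a‖ ‖b‖ ^ 2 := by rw [norm_sq_sub_eq_one hp hv hvsq hab', hab, max_self, mul_one]
  · have hne : ‖a ^ 2‖ ≠ ‖-(v * b ^ 2)‖ := by
      simpa [hv, pow_left_inj₀ (norm_nonneg a) (norm_nonneg b) two_ne_zero] using hab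
    rw [sub_eq_add_neg, IsUltrametricDist.norm_add_eq_max_of_norm_ne_norm hne]
    simp [hv, pow_left_monotoneOn.map_max]

theorem norm_sq_ne_norm_p (t : ℚ_[p]) : ‖t‖ ^ 2 ≠ ‖(p : ℚ_[p])‖ := by
  have hp1 : (1 : ℝ) < p := by exact_mod_cast (Fact.out : p.Prime).one_lt
  rcases eq_or_ne t 0 with rfl | ht
  · simpa [norm_p] using (zero_lt_one.trans hp1).ne
  · rw [norm_eq_zpow_neg_valuation ht, norm_p, ← zpow_natCast, ← zpow_mul, ← zpow_neg_one]
    intro h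
    have := zpow_right_injective₀ (zero_lt_one.trans hp1) hp1.ne' h
    omega

theorem sq_sub_mul_sq_add_mul_sq_eq_zero (hp : p ≠ 2) {v : ℚ_[p]} (hv : ‖v‖ = 1)
    (hvsq : ¬IsSquare v) {a b c : ℚ_[p]} (h : a ^ 2 - v * b ^ 2 + p * c ^ 2 = 0) :
    a = 0 ∧ b = 0 ∧ c = 0 := by
  have hnorm : max ‖a‖ ‖b‖ ^ 2 = ‖(p : ℚ_[p])‖ * ‖c‖ ^ 2 := by
    rw [← norm_sq_sub_mul_sq hp hv hvsq, eq_neg_of_add_eq_zero_left h, norm_neg, norm_mul, norm_pow]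
  obtain rfl : c = 0 := by
    by_contra hc
    obtain ⟨e, he⟩ : ∃ e, max ‖a‖ ‖b‖ = ‖e‖ := (max_choice ‖a‖ ‖b‖).elim (⟨a, ·⟩) (⟨b, ·⟩)
    apply norm_sq_ne_norm_p (e / c)
    rw [norm_div, div_pow, ← he, hnorm, mul_div_cancel_right₀ _ (by simpa using hc)]
  have hmax : max ‖a‖ ‖b‖ = 0 := by simpa using hnorm
  obtain ⟨ha, hb⟩ := max_le_iff.1 hmax.le
  exact ⟨norm_le_zero_iff.1 ha, norm_le_zero_iff.1 hb, rfl⟩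

end Padic

open Matrix

section
variable {ι K : Type*} [Fintype ι] [Field K]

theorem Matrix.IsSymm.dotProduct_mulVec_comm {A : Matrix ι ι K} (hA : A.IsSymm) (z w : ι → K) :
    z ⬝ᵥ A *ᵥ w = w ⬝ᵥ A *ᵥ z := by
  rw [dotProduct_mulVec, ← mulVec_transpose, hA.eq, dotProduct_comm]

theorem exists_ne_zero_dotProduct_eq_zero₂ (h : 2 < Fintype.card ι) (a b : ι → K) :
    ∃ u ≠ 0, a ⬝ᵥ u = 0 ∧ b ⬝ᵥ u = 0 := by
  have hker : LinearMap.ker (of ![a, b]).mulVecLin ≠ ⊥ :=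
    LinearMap.ker_ne_bot_of_finrank_lt (by simpa using h)
  obtain ⟨u, hu, hu0⟩ := Submodule.exists_mem_ne_zero_of_ne_bot hker
  have hu' := congrFun (LinearMap.mem_ker.mp hu)
  exact ⟨u, hu0, by simpa using hu' 0, by simpa using hu' 1⟩

variable [DecidableEq ι]

def reflectionMatrix (A : Matrix ι ι K) (u : ι → K) : Matrix ι ι K :=
  1 - (2 / (u ⬝ᵥ A *ᵥ u)) • vecMulVec u (u ᵥ* A)

theorem reflectionMatrix_mulVec (A : Matrix ι ι K) (u z : ι → K) :
    reflectionMatrix A u *ᵥ z = z - (2 * (u ⬝ᵥ A *ᵥ z) / (u ⬝ᵥ A *ᵥ u)) • u := by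
  rw [reflectionMatrix, sub_mulVec, one_mulVec, smul_mulVec, vecMulVec_mulVec, op_smul_eq_smul,
    ← dotProduct_mulVec, smul_smul, mul_div_right_comm]

theorem reflectionMatrix_mulVec_of_orthogonal {A : Matrix ι ι K} {u z : ι → K}
    (h : u ⬝ᵥ A *ᵥ z = 0) : reflectionMatrix A u *ᵥ z = z := by
  simp [reflectionMatrix_mulVec, h]

theorem reflectionMatrix_sub_mulVec {A : Matrix ι ι K} (hA : A.IsSymm) {x y : ι → K}
    (hxy : x ⬝ᵥ A *ᵥ x = y ⬝ᵥ A *ᵥ y) (hQ : (x - y) ⬝ᵥ A *ᵥ (x - y) ≠ 0) :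
    reflectionMatrix A (x - y) *ᵥ x = y := by
  have hB := hA.dotProduct_mulVec_comm x y
  have key : 2 * ((x - y) ⬝ᵥ A *ᵥ x) = (x - y) ⬝ᵥ A *ᵥ (x - y) := by
    simp only [mulVec_sub, sub_dotProduct, dotProduct_sub]
    linear_combination hxy + hB
  rw [reflectionMatrix_mulVec, key, div_self hQ, one_smul, sub_sub_cancel]

theorem Matrix.transpose_mul_mul_eq_self_iff (A R : Matrix ι ι K) :
    Rᵀ * A * R = A ↔ ∀ z w, R *ᵥ z ⬝ᵥ A *ᵥ (R *ᵥ w) = z ⬝ᵥ A *ᵥ w := by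
  rw [← toBilin'.injective.eq_iff, LinearMap.ext_iff₂]
  simp only [toBilin'_apply', ← mulVec_mulVec, dotProduct_mulVec, vecMul_transpose, vecMul_vecMul]

theorem transpose_mul_mul_reflectionMatrix {A : Matrix ι ι K} (hA : A.IsSymm) {u : ι → K}
    (hu : u ⬝ᵥ A *ᵥ u ≠ 0) : (reflectionMatrix A u)ᵀ * A * reflectionMatrix A u = A := by
  refine (transpose_mul_mul_eq_self_iff _ _).2 fun z w => ?_
  have hB := hA.dotProduct_mulVec_comm z u
  simp only [reflectionMatrix_mulVec, mulVec_sub, mulVec_smul, sub_dotProduct, dotProduct_sub,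
    smul_dotProduct, dotProduct_smul, smul_eq_mul]
  field_simp
  rw [hB]
  ring

theorem det_reflectionMatrix {A : Matrix ι ι K} {u : ι → K} (hu : u ⬝ᵥ A *ᵥ u ≠ 0) :
    (reflectionMatrix A u).det = -1 := by
  rw [reflectionMatrix, sub_eq_add_neg, ← neg_smul, ← vecMulVec_smul, vecMulVec_eq Unit,
    det_one_add_replicateCol_mul_replicateRow, smul_dotProduct, ← dotProduct_mulVec, smul_eq_mul]
  field_simp
  ring

theorem exists_rotation_of_anisotropic {A : Matrix ι ι K} (hA : A.IsSymm)
    (hcard : 2 < Fintype.card ι) (haniso : ∀ z, z ⬝ᵥ A *ᵥ z = 0 → z = 0) {n x y : ι → K}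
    (hnx : n ⬝ᵥ A *ᵥ x = 0) (hny : n ⬝ᵥ A *ᵥ y = 0) (hxy : x ⬝ᵥ A *ᵥ x = y ⬝ᵥ A *ᵥ y) :
    ∃ R : Matrix ι ι K, Rᵀ * A * R = A ∧ R.det = 1 ∧ R *ᵥ n = n ∧ R *ᵥ x = y := by
  rcases eq_or_ne x y with rfl | hne
  · exact ⟨1, by simp, det_one, one_mulVec n, one_mulVec x⟩
  have hd : (x - y) ⬝ᵥ A *ᵥ (x - y) ≠ 0 := fun h => hne (sub_eq_zero.1 (haniso _ h))
  obtain ⟨u, hu0, hun, huy⟩ := exists_ne_zero_dotProduct_eq_zero₂ hcard (A *ᵥ n) (A *ᵥ y)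
  rw [dotProduct_comm] at hun huy
  have hu : u ⬝ᵥ A *ᵥ u ≠ 0 := fun h => hu0 (haniso u h)
  have hdn : (x - y) ⬝ᵥ A *ᵥ n = 0 := by
    rw [hA.dotProduct_mulVec_comm, mulVec_sub, dotProduct_sub, hnx, hny, sub_zero]
  refine ⟨reflectionMatrix A u * reflectionMatrix A (x - y), ?_, ?_, ?_, ?_⟩
  · calc (reflectionMatrix A u * reflectionMatrix A (x - y))ᵀ * A *
          (reflectionMatrix A u * reflectionMatrix A (x - y))
        = (reflectionMatrix A (x - y))ᵀ * ((reflectionMatrix A u)ᵀ * A * reflectionMatrix A u) *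
            reflectionMatrix A (x - y) := by simp only [transpose_mul, Matrix.mul_assoc]
      _ = A := by
        rw [transpose_mul_mul_reflectionMatrix hA hu, transpose_mul_mul_reflectionMatrix hA hd]
  · rw [det_mul, det_reflectionMatrix hu, det_reflectionMatrix hd]
    norm_num
  · rw [← mulVec_mulVec, reflectionMatrix_mulVec_of_orthogonal hdn,
      reflectionMatrix_mulVec_of_orthogonal hun]
  · rw [← mulVec_mulVec, reflectionMatrix_sub_mulVec hA hxy hd,
      reflectionMatrix_mulVec_of_orthogonal huy]

end

theorem Padic.anisotropic_diagonal {p : ℕ} [Fact p.Prime] (hp : p ≠ 2) {v : ℚ_[p]} (hv : ‖v‖ = 1)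
    (hvsq : ¬IsSquare v) (z : Fin 3 → ℚ_[p]) (hz : z ⬝ᵥ diagonal ![1, -v, (p : ℚ_[p])] *ᵥ z = 0) :
    z = 0 := by
  have hQ : z 0 ^ 2 - v * z 1 ^ 2 + p * z 2 ^ 2 = 0 := by
    rw [← hz]
    simp only [dotProduct, mulVec_diagonal, Fin.sum_univ_three, cons_val_zero, cons_val_one,
      cons_val]
    ring
  obtain ⟨h0, h1, h2⟩ := sq_sub_mul_sq_add_mul_sq_eq_zero hp hv hvsq hQ
  ext i
  fin_cases i <;> assumption

theorem exists_rotation_around_axis_iff_general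
    (p : ℕ) [Fact p.Prime] (hp : p ≠ 2)
    (v : ℚ_[p]) (hv : ‖v‖ = 1) (hvsq : ¬ IsSquare v)
    (A : Matrix (Fin 3) (Fin 3) ℚ_[p])
    (hA : A = Matrix.diagonal ![1, -v, (p : ℚ_[p])])
    (Q : (Fin 3 → ℚ_[p]) → ℚ_[p]) (hQ : ∀ z, Q z = z ⬝ᵥ A.mulVec z)
    (B : (Fin 3 → ℚ_[p]) → (Fin 3 → ℚ_[p]) → ℚ_[p])
    (hB : ∀ z w, B z w = z ⬝ᵥ A.mulVec w)
    (n : Fin 3 → ℚ_[p])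
    (x y : Fin 3 → ℚ_[p])
    (hnx : B n x = 0) (hny : B n y = 0) :
    (∃ R : Matrix (Fin 3) (Fin 3) ℚ_[p], Rᵀ * A * R = A ∧ R.det = 1 ∧
      R.mulVec n = n ∧ R.mulVec x = y) ↔ Q x = Q y := by
  rw [hQ, hQ]
  rw [hB] at hnx hny
  constructor
  · rintro ⟨R, hR, -, -, rfl⟩
    exact ((transpose_mul_mul_eq_self_iff A R).1 hR x x).symm
  · subst hA
    exact exists_rotation_of_anisotropic (isSymm_diagonal _) (by simp)
      (Padic.anisotropic_diagonal hp hv hvsq) hnx hny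

/-- Given a nonzero axis `n` and nonzero vectors `x, y` orthogonal to
`n` (w.r.t. the bilinear form of `A = diag(1,-v,p)`), there is a rotation
`R ∈ SO(3)_p` fixing `n` with `R x = y` iff `Q₊(x) = Q₊(y)`. -/
theorem exists_rotation_around_axis_iff
    (p : ℕ) [Fact p.Prime] (hp : p ≠ 2)
    (v : ℚ_[p]) (hv : ‖v‖ = 1) (hvsq : ¬ IsSquare v)
    (A : Matrix (Fin 3) (Fin 3) ℚ_[p])
    (hA : A = Matrix.diagonal ![1, -v, (p : ℚ_[p])])
    (Q : (Fin 3 → ℚ_[p]) → ℚ_[p]) (hQ : ∀ z, Q z = z ⬝ᵥ A.mulVec z)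
    (B : (Fin 3 → ℚ_[p]) → (Fin 3 → ℚ_[p]) → ℚ_[p])
    (hB : ∀ z w, B z w = z ⬝ᵥ A.mulVec w)
    (n : Fin 3 → ℚ_[p]) (hn : n ≠ 0)
    (x y : Fin 3 → ℚ_[p]) (hx : x ≠ 0) (hy : y ≠ 0)
    (hnx : B n x = 0) (hny : B n y = 0) :
    (∃ R : Matrix (Fin 3) (Fin 3) ℚ_[p], Rᵀ * A * R = A ∧ R.det = 1 ∧
      R.mulVec n = n ∧ R.mulVec x = y) ↔ Q x = Q y :=
  exists_rotation_around_axis_iff_general p hp v hv hvsq A hA Q hQ B hB n x y hnx hny
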